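/- In the bt-algebra E_n(q), for all 1 ≤ a ≤ n−1 and all A ∈ SetPar_n: (a) g_a e(A) = e(σ_a A) g_a, and (b) g_a ē(A) = ē(σ_a A) g_a. -/

import Mathlib

open scoped Classical

noncomputable section

namespace BT

/-- Generators of the bt-algebra (0-based indexing): `g a h` is the paper's `g_{a+1}`,
`e a h` is the paper's `e_{a+1}`. -/
inductive Gen (n : ℕ) : Type
  | g : (a : ℕ) → a + 1 < n → Gen n
  | e : (a : ℕ) → a + 1 < n → Gen n

variable (𝕜 : Type) [Field 𝕜] (n : ℕ) (q : 𝕜)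

abbrev F : Type := FreeAlgebra 𝕜 (Gen n)

def G (a : ℕ) (h : a + 1 < n) : F 𝕜 n := FreeAlgebra.ι 𝕜 (Gen.g a h)

def Eg (a : ℕ) (h : a + 1 < n) : F 𝕜 n := FreeAlgebra.ι 𝕜 (Gen.e a h)

/-- The defining relations of the bt-algebra `E_n(q)`. -/
inductive Rel : F 𝕜 n → F 𝕜 n → Prop
  | ge (a : ℕ) (h : a + 1 < n) :
      Rel (G 𝕜 n a h * Eg 𝕜 n a h) (Eg 𝕜 n a h * G 𝕜 n a h)
  | braid (a : ℕ) (h : a + 2 < n) :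
      Rel (G 𝕜 n a (by omega) * G 𝕜 n (a + 1) h * G 𝕜 n a (by omega))
        (G 𝕜 n (a + 1) h * G 𝕜 n a (by omega) * G 𝕜 n (a + 1) h)
  | gfar (a b : ℕ) (ha : a + 1 < n) (hb : b + 1 < n) (hab : a + 1 < b) :
      Rel (G 𝕜 n a ha * G 𝕜 n b hb) (G 𝕜 n b hb * G 𝕜 n a ha)
  | egg (a b : ℕ) (ha : a + 1 < n) (hb : b + 1 < n) (hab : b = a + 1 ∨ a = b + 1) :
      Rel (Eg 𝕜 n a ha * G 𝕜 n b hb * G 𝕜 n a ha)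
        (G 𝕜 n b hb * G 𝕜 n a ha * Eg 𝕜 n b hb)
  | eeg1 (a b : ℕ) (ha : a + 1 < n) (hb : b + 1 < n) (hab : b = a + 1 ∨ a = b + 1) :
      Rel (Eg 𝕜 n a ha * Eg 𝕜 n b hb * G 𝕜 n b hb)
        (Eg 𝕜 n a ha * G 𝕜 n b hb * Eg 𝕜 n a ha)
  | eeg2 (a b : ℕ) (ha : a + 1 < n) (hb : b + 1 < n) (hab : b = a + 1 ∨ a = b + 1) :
      Rel (Eg 𝕜 n a ha * G 𝕜 n b hb * Eg 𝕜 n a ha)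
        (G 𝕜 n b hb * Eg 𝕜 n a ha * Eg 𝕜 n b hb)
  | ee (a b : ℕ) (ha : a + 1 < n) (hb : b + 1 < n) :
      Rel (Eg 𝕜 n a ha * Eg 𝕜 n b hb) (Eg 𝕜 n b hb * Eg 𝕜 n a ha)
  | gefar (a b : ℕ) (ha : a + 1 < n) (hb : b + 1 < n) (hab : a + 1 < b ∨ b + 1 < a) :
      Rel (G 𝕜 n a ha * Eg 𝕜 n b hb) (Eg 𝕜 n b hb * G 𝕜 n a ha)
  | esq (a : ℕ) (ha : a + 1 < n) :
      Rel (Eg 𝕜 n a ha * Eg 𝕜 n a ha) (Eg 𝕜 n a ha)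
  | gsq (a : ℕ) (ha : a + 1 < n) :
      Rel (G 𝕜 n a ha ^ 2)
        (algebraMap 𝕜 (F 𝕜 n) q + (q - 1) • (Eg 𝕜 n a ha * G 𝕜 n a ha))

/-- The bt-algebra `E_n(q)`. -/
abbrev B : Type := RingQuot (Rel 𝕜 n q)

def π : F 𝕜 n →ₐ[𝕜] B 𝕜 n q := RingQuot.mkAlgHom 𝕜 (Rel 𝕜 n q)

def g (a : ℕ) (h : a + 1 < n) : B 𝕜 n q := π 𝕜 n q (G 𝕜 n a h)

def e (a : ℕ) (h : a + 1 < n) : B 𝕜 n q := π 𝕜 n q (Eg 𝕜 n a h)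

/-- The simple transposition `σ_a = (a, a+1)` (0-based). -/
def sw (a : ℕ) (h : a + 1 < n) : Equiv.Perm (Fin n) :=
  Equiv.swap ⟨a, by omega⟩ ⟨a + 1, h⟩

/-- `g_a` if the index is in range, else `1`. -/
def gTot (a : ℕ) : B 𝕜 n q := if h : a + 1 < n then g 𝕜 n q a h else 1

/-- `e_a` if the index is in range, else `1`. -/
def eTot (a : ℕ) : B 𝕜 n q := if h : a + 1 < n then e 𝕜 n q a h else 1

/-- `g_a⁻¹ = q⁻¹ g_a + (q⁻¹ − 1) e_a` if the index is in range, else `1`. -/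
def ginvTot (a : ℕ) : B 𝕜 n q :=
  if h : a + 1 < n then q⁻¹ • g 𝕜 n q a h + (q⁻¹ - 1) • e 𝕜 n q a h else 1

/-- `e_{ab} = g_{b-1} ⋯ g_{a+1} e_a g_{a+1}⁻¹ ⋯ g_{b-1}⁻¹` for `a < b` (0-based). -/
def eabN (a b : ℕ) : B 𝕜 n q :=
  ((((List.range (b - 1 - a)).map (fun i => a + 1 + i)).reverse).map (gTot 𝕜 n q)).prod
    * eTot 𝕜 n q a
    * (((List.range (b - 1 - a)).map (fun i => a + 1 + i)).map (ginvTot 𝕜 n q)).prod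

/-- `e_{ab}`, symmetrized so that `e_{ba} = e_{ab}`. -/
def eab (a b : Fin n) : B 𝕜 n q :=
  if (a : ℕ) ≤ (b : ℕ) then eabN 𝕜 n q a b else eabN 𝕜 n q b a

/-- `e(A) = ∏_{a ∼_A b, a ≠ b} e_{ab}` (the factors commute, so the product may be taken
in any fixed order). -/
def eSet (A : Setoid (Fin n)) : B 𝕜 n q :=
  (((List.finRange n) ×ˢ (List.finRange n)).map
    (fun p => if A.r p.1 p.2 ∧ p.1 ≠ p.2 then eab 𝕜 n q p.1 p.2 else 1)).prod

/-- The number of blocks of a set partition. -/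
def nblocks (A : Setoid (Fin n)) : ℕ := Nat.card (Quotient A)

/-- The number of blocks of `A` contained in the block `c` of `B` (when `A ≤ B`). -/
def mcount (A B : Setoid (Fin n)) (c : Quotient B) : ℕ :=
  Nat.card {dA : Quotient A // B.r dA.out c.out}

/-- The Möbius function of the poset `(SetPar_n, ⊆)`:
`μ(A,B) = (−1)^{r−s} ∏_{i=1}^{r−1} (i!)^{r_{i+1}}` if `A ⊆ B` and `0` otherwise, where `r, s`
are the numbers of blocks of `A, B` and `r_i` is the number of blocks of `B` containing
exactly `i` blocks of `A`. -/
def mob (A B : Setoid (Fin n)) : ℤ :=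
  if A ≤ B then
    (-1 : ℤ) ^ (nblocks n A - nblocks n B) *
      ∏ i ∈ Finset.Icc 1 (nblocks n A - 1),
        (Nat.factorial i : ℤ) ^ (Nat.card {c : Quotient B // mcount n A B c = i + 1})
  else 0

instance : Finite (Setoid (Fin n)) :=
  Finite.of_injective (fun A : Setoid (Fin n) => A.r)
    (fun A B h => by cases A; cases B; simp only at h; subst h; rfl)

noncomputable instance : Fintype (Setoid (Fin n)) := Fintype.ofFinite _

/-- `ē(A) = Σ_{B ⊇ A} μ(A,B) e(B)`. -/
def ebar (A : Setoid (Fin n)) : B 𝕜 n q :=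
  ∑ C ∈ Finset.univ.filter (fun C : Setoid (Fin n) => A ≤ C),
    mob n A C • eSet 𝕜 n q C

/-- The action of a permutation on set partitions. -/
def permSetoid (σ : Equiv.Perm (Fin n)) (A : Setoid (Fin n)) : Setoid (Fin n) where
  r x y := A.r (σ.symm x) (σ.symm y)
  iseqv := ⟨fun _ => A.iseqv.refl _, fun h => A.iseqv.symm h, fun h h' => A.iseqv.trans h h'⟩

end BT

noncomputable section
namespace BT

variable (𝕜 : Type) [Field 𝕜] (n : ℕ) (q : 𝕜)

lemma B_ge (a : ℕ) (h : a+1<n) :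
    g 𝕜 n q a h * e 𝕜 n q a h = e 𝕜 n q a h * g 𝕜 n q a h := by
  simpa [g, e, π, map_mul] using RingQuot.mkAlgHom_rel 𝕜 (Rel.ge a h)

lemma B_gsq (a : ℕ) (h : a+1<n) :
    g 𝕜 n q a h * g 𝕜 n q a h
      = algebraMap 𝕜 (B 𝕜 n q) q + (q-1) • (e 𝕜 n q a h * g 𝕜 n q a h) := by
  have := RingQuot.mkAlgHom_rel 𝕜 (Rel.gsq (q := q) a h)
  rw [map_pow, map_add, map_smul, map_mul, AlgHom.commutes] at this
  simpa [g, e, π, pow_two] using this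

/-- `Commute` of the generators `g a`, `e a` (same index). -/
lemma comm_ge_self (a : ℕ) : Commute (gTot 𝕜 n q a) (eTot 𝕜 n q a) := by
  unfold gTot eTot
  split_ifs with h
  · exact B_ge 𝕜 n q a h
  · exact Commute.one_right _

lemma comm_ee (a b : ℕ) : Commute (eTot 𝕜 n q a) (eTot 𝕜 n q b) := by
  unfold eTot
  split_ifs with h1 h2 h2
  · simpa [e, π, map_mul, Commute, SemiconjBy] using RingQuot.mkAlgHom_rel 𝕜 (Rel.ee (q := q) a b h1 h2)
  · exact Commute.one_right _
  · exact Commute.one_left _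
  · exact Commute.one_left _

lemma comm_gg (a b : ℕ) (hab : a + 1 < b ∨ b + 1 < a ∨ a = b) :
    Commute (gTot 𝕜 n q a) (gTot 𝕜 n q b) := by
  unfold gTot
  split_ifs with h1 h2 h2
  · rcases hab with h | h | h
    · simpa [g, π, map_mul, Commute, SemiconjBy] using RingQuot.mkAlgHom_rel 𝕜 (Rel.gfar (q := q) a b h1 h2 h)
    · simpa [g, π, map_mul, Commute, SemiconjBy] using (RingQuot.mkAlgHom_rel 𝕜 (Rel.gfar (q := q) b a h2 h1 h)).symm
    · subst h; exact Commute.refl _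
  · exact Commute.one_right _
  · exact Commute.one_left _
  · exact Commute.one_left _

lemma comm_ge_far (a b : ℕ) (hab : a + 1 < b ∨ b + 1 < a) :
    Commute (gTot 𝕜 n q a) (eTot 𝕜 n q b) := by
  unfold gTot eTot
  split_ifs with h1 h2 h2
  · simpa [g, e, π, map_mul, Commute, SemiconjBy] using RingQuot.mkAlgHom_rel 𝕜 (Rel.gefar (q := q) a b h1 h2 hab)
  · exact Commute.one_right _
  · exact Commute.one_left _
  · exact Commute.one_left _

lemma comm_ge_tot (a b : ℕ) (hab : a + 1 < b ∨ b + 1 < a ∨ a = b) :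
    Commute (gTot 𝕜 n q a) (eTot 𝕜 n q b) := by
  rcases hab with h | h | h
  · exact comm_ge_far 𝕜 n q a b (Or.inl h)
  · exact comm_ge_far 𝕜 n q a b (Or.inr h)
  · subst h; exact comm_ge_self 𝕜 n q a

lemma esq_t (a : ℕ) : eTot 𝕜 n q a * eTot 𝕜 n q a = eTot 𝕜 n q a := by
  unfold eTot
  split_ifs with h
  · simpa [e, π, map_mul] using RingQuot.mkAlgHom_rel 𝕜 (Rel.esq (q := q) a h)
  · exact one_mul _

lemma gsq_t (a : ℕ) (h : a+1<n) :
    gTot 𝕜 n q a * gTot 𝕜 n q a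
      = algebraMap 𝕜 (B 𝕜 n q) q + (q-1) • (eTot 𝕜 n q a * gTot 𝕜 n q a) := by
  unfold gTot eTot; rw [dif_pos h, dif_pos h]; exact B_gsq 𝕜 n q a h

lemma braid_t (a : ℕ) (h : a+2<n) :
    gTot 𝕜 n q a * gTot 𝕜 n q (a+1) * gTot 𝕜 n q a
      = gTot 𝕜 n q (a+1) * gTot 𝕜 n q a * gTot 𝕜 n q (a+1) := by
  have h1 : a + 1 < n := by omega
  have h2 : a + 1 + 1 < n := by omega
  unfold gTot; rw [dif_pos h1, dif_pos h2]
  simpa [g, π, map_mul] using RingQuot.mkAlgHom_rel 𝕜 (Rel.braid (q := q) a h2)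

lemma egg_t (a b : ℕ) (ha : a+1<n) (hb : b+1<n) (hab : b = a + 1 ∨ a = b + 1) :
    eTot 𝕜 n q a * gTot 𝕜 n q b * gTot 𝕜 n q a
      = gTot 𝕜 n q b * gTot 𝕜 n q a * eTot 𝕜 n q b := by
  unfold gTot eTot; rw [dif_pos ha, dif_pos hb, dif_pos ha, dif_pos hb]
  simpa [g, e, π, map_mul] using RingQuot.mkAlgHom_rel 𝕜 (Rel.egg (q := q) a b ha hb hab)

lemma eeg1_t (a b : ℕ) (ha : a+1<n) (hb : b+1<n) (hab : b = a + 1 ∨ a = b + 1) :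
    eTot 𝕜 n q a * eTot 𝕜 n q b * gTot 𝕜 n q b
      = eTot 𝕜 n q a * gTot 𝕜 n q b * eTot 𝕜 n q a := by
  unfold gTot eTot; rw [dif_pos ha, dif_pos hb, dif_pos hb]
  simpa [g, e, π, map_mul] using RingQuot.mkAlgHom_rel 𝕜 (Rel.eeg1 (q := q) a b ha hb hab)

lemma eeg2_t (a b : ℕ) (ha : a+1<n) (hb : b+1<n) (hab : b = a + 1 ∨ a = b + 1) :
    eTot 𝕜 n q a * gTot 𝕜 n q b * eTot 𝕜 n q a
      = gTot 𝕜 n q b * eTot 𝕜 n q a * eTot 𝕜 n q b := by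
  unfold gTot eTot; rw [dif_pos ha, dif_pos hb, dif_pos hb]
  simpa [g, e, π, map_mul] using RingQuot.mkAlgHom_rel 𝕜 (Rel.eeg2 (q := q) a b ha hb hab)

lemma gT_ginvT (hq0 : q ≠ 0) (a : ℕ) : gTot 𝕜 n q a * ginvTot 𝕜 n q a = 1 := by
  unfold gTot ginvTot
  split_ifs with h
  · rw [mul_add, mul_smul_comm, mul_smul_comm, B_gsq, B_ge, smul_add, smul_smul,
      add_assoc, ← add_smul]
    have h0 : q⁻¹*(q-1) + (q⁻¹-1) = 0 := by field_simp; ring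
    rw [h0, zero_smul, add_zero, Algebra.smul_def, ← map_mul, inv_mul_cancel₀ hq0, map_one]
  · exact one_mul _

lemma ginvT_gT (hq0 : q ≠ 0) (a : ℕ) : ginvTot 𝕜 n q a * gTot 𝕜 n q a = 1 := by
  unfold gTot ginvTot
  split_ifs with h
  · rw [add_mul, smul_mul_assoc, smul_mul_assoc, B_gsq, smul_add, smul_smul,
      add_assoc, ← add_smul]
    have h0 : q⁻¹*(q-1) + (q⁻¹-1) = 0 := by field_simp; ring
    rw [h0, zero_smul, add_zero, Algebra.smul_def, ← map_mul, inv_mul_cancel₀ hq0, map_one]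
  · exact one_mul _

lemma comm_ginvT {x : B 𝕜 n q} (a : ℕ) (h1 : Commute x (gTot 𝕜 n q a))
    (h2 : Commute x (eTot 𝕜 n q a)) : Commute x (ginvTot 𝕜 n q a) := by
  unfold ginvTot
  split_ifs with h
  · unfold gTot at h1; rw [dif_pos h] at h1
    unfold eTot at h2; rw [dif_pos h] at h2
    exact (h1.smul_right _).add_right (h2.smul_right _)
  · exact Commute.one_right _

lemma comm_ginv_ee (a : ℕ) : Commute (eTot 𝕜 n q a) (ginvTot 𝕜 n q a) :=
  comm_ginvT 𝕜 n q a (comm_ge_self 𝕜 n q a).symm (Commute.refl _)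

end BT
end


noncomputable section
namespace BT

variable (𝕜 : Type) [Field 𝕜] (n : ℕ) (q : 𝕜)

lemma eabN_base (x : ℕ) : eabN 𝕜 n q x (x+1) = eTot 𝕜 n q x := by
  simp [eabN]

lemma eabN_succ (x y : ℕ) (h : x < y) :
    eabN 𝕜 n q x (y+1) = gTot 𝕜 n q y * eabN 𝕜 n q x y * ginvTot 𝕜 n q y := by
  have h1 : y + 1 - 1 - x = (y - 1 - x) + 1 := by omega
  have h1' : y - x = (y - 1 - x) + 1 := by omega
  have h2 : x + 1 + (y - 1 - x) = y := by omega
  simp [eabN, h1, h1', List.range_succ, h2, mul_assoc]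

lemma conj_comm (hq0 : q ≠ 0) (c : ℕ) {E1 E2 E1' E2' : B 𝕜 n q}
    (h1 : gTot 𝕜 n q c * E1 = E1' * gTot 𝕜 n q c)
    (h2 : gTot 𝕜 n q c * E2 = E2' * gTot 𝕜 n q c)
    (h : Commute E1' E2') : Commute E1 E2 := by
  set gg := gTot 𝕜 n q c
  set gi := ginvTot 𝕜 n q c
  have k1 : E1 = gi * (E1' * gg) := by
    rw [← h1, ← mul_assoc, ginvT_gT 𝕜 n q hq0, one_mul]
  have k2 : E2 = gi * (E2' * gg) := by
    rw [← h2, ← mul_assoc, ginvT_gT 𝕜 n q hq0, one_mul]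
  have key : ∀ X Y : B 𝕜 n q, (gi * (X * gg)) * (gi * (Y * gg)) = gi * (X * (Y * gg)) := by
    intro X Y
    calc (gi * (X * gg)) * (gi * (Y * gg)) = gi * (X * ((gg * gi) * (Y * gg))) := by
          simp only [mul_assoc]
      _ = gi * (X * (Y * gg)) := by rw [gT_ginvT 𝕜 n q hq0, one_mul]
  show E1 * E2 = E2 * E1
  rw [k1, k2, key, key, ← mul_assoc E1', ← mul_assoc E2', h.eq]

/-- transport of a `g`-conjugation equation to `ginv`. -/
lemma conj_ginv (hq0 : q ≠ 0) (c : ℕ) {E E' : B 𝕜 n q}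
    (h : gTot 𝕜 n q c * E = E' * gTot 𝕜 n q c) :
    ginvTot 𝕜 n q c * E' = E * ginvTot 𝕜 n q c := by
  have : ginvTot 𝕜 n q c * (gTot 𝕜 n q c * E) * ginvTot 𝕜 n q c
      = ginvTot 𝕜 n q c * (E' * gTot 𝕜 n q c) * ginvTot 𝕜 n q c := by rw [h]
  rw [← mul_assoc, ginvT_gT 𝕜 n q hq0, one_mul] at this
  rw [mul_assoc, mul_assoc, gT_ginvT 𝕜 n q hq0, mul_one] at this
  exact this.symm

lemma comm_far_g (c x y : ℕ) (hxy : x < y) (hc : c+1 < x ∨ y < c) :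
    Commute (gTot 𝕜 n q c) (eabN 𝕜 n q x y) := by
  revert hc
  induction y, hxy using Nat.le_induction with
  | base =>
    intro hc
    rw [eabN_base]
    exact comm_ge_tot 𝕜 n q c x (by omega)
  | succ y hy ih =>
    intro hc
    rw [eabN_succ 𝕜 n q x y hy]
    have hgy : Commute (gTot 𝕜 n q c) (gTot 𝕜 n q y) := comm_gg 𝕜 n q c y (by omega)
    have hey : Commute (gTot 𝕜 n q c) (eTot 𝕜 n q y) := comm_ge_tot 𝕜 n q c y (by omega)
    exact (hgy.mul_right (ih (by omega))).mul_right (comm_ginvT 𝕜 n q y hgy hey)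

lemma comm_far_e (c x y : ℕ) (hxy : x < y) (hc : c+1 < x ∨ y < c) :
    Commute (eTot 𝕜 n q c) (eabN 𝕜 n q x y) := by
  revert hc
  induction y, hxy using Nat.le_induction with
  | base =>
    intro hc
    rw [eabN_base]
    exact comm_ee 𝕜 n q c x
  | succ y hy ih =>
    intro hc
    rw [eabN_succ 𝕜 n q x y hy]
    have hgy : Commute (eTot 𝕜 n q c) (gTot 𝕜 n q y) := (comm_ge_tot 𝕜 n q y c (by omega)).symm
    have hey : Commute (eTot 𝕜 n q c) (eTot 𝕜 n q y) := comm_ee 𝕜 n q c y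
    exact (hgy.mul_right (ih (by omega))).mul_right (comm_ginvT 𝕜 n q y hgy hey)

lemma comm_far_ginv (c x y : ℕ) (hxy : x < y) (hc : c+1 < x ∨ y < c) :
    Commute (ginvTot 𝕜 n q c) (eabN 𝕜 n q x y) :=
  (comm_ginvT 𝕜 n q c (comm_far_g 𝕜 n q c x y hxy hc).symm
    (comm_far_e 𝕜 n q c x y hxy hc).symm).symm

end BT
end


noncomputable section
namespace BT

variable (𝕜 : Type) [Field 𝕜] (n : ℕ) (q : 𝕜)

/-- bottom recursion: `g_x e_{x,y} = e_{x+1,y} g_x`. -/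
lemma L_R (hq0 : q ≠ 0) (x y : ℕ) (hxy : x + 2 ≤ y) (hy : y < n) :
    SemiconjBy (gTot 𝕜 n q x) (eabN 𝕜 n q x y) (eabN 𝕜 n q (x+1) y) := by
  revert hy
  induction y, hxy using Nat.le_induction with
  | base =>
    intro hy
    rw [show x + 2 = (x+1) + 1 from rfl, eabN_succ 𝕜 n q x (x+1) (by omega),
      eabN_base, eabN_base]
    show gTot 𝕜 n q x * (gTot 𝕜 n q (x+1) * eTot 𝕜 n q x * ginvTot 𝕜 n q (x+1))
        = eTot 𝕜 n q (x+1) * gTot 𝕜 n q x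
    have e1 := egg_t 𝕜 n q (x+1) x (by omega) (by omega) (Or.inr rfl)
    calc gTot 𝕜 n q x * (gTot 𝕜 n q (x+1) * eTot 𝕜 n q x * ginvTot 𝕜 n q (x+1))
        = (gTot 𝕜 n q x * gTot 𝕜 n q (x+1) * eTot 𝕜 n q x) * ginvTot 𝕜 n q (x+1) := by
          simp only [mul_assoc]
      _ = (eTot 𝕜 n q (x+1) * gTot 𝕜 n q x * gTot 𝕜 n q (x+1)) * ginvTot 𝕜 n q (x+1) := by
          rw [e1]
      _ = eTot 𝕜 n q (x+1) * gTot 𝕜 n q x * (gTot 𝕜 n q (x+1) * ginvTot 𝕜 n q (x+1)) := by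
          simp only [mul_assoc]
      _ = eTot 𝕜 n q (x+1) * gTot 𝕜 n q x := by rw [gT_ginvT 𝕜 n q hq0, mul_one]
  | succ y hy ih =>
    intro hyn
    rw [eabN_succ 𝕜 n q x y (by omega), eabN_succ 𝕜 n q (x+1) y (by omega)]
    have hg : SemiconjBy (gTot 𝕜 n q x) (gTot 𝕜 n q y) (gTot 𝕜 n q y) :=
      comm_gg 𝕜 n q x y (by omega)
    have hgi : SemiconjBy (gTot 𝕜 n q x) (ginvTot 𝕜 n q y) (ginvTot 𝕜 n q y) :=
      comm_ginvT 𝕜 n q y (comm_gg 𝕜 n q x y (by omega)) (comm_ge_tot 𝕜 n q x y (by omega))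
    exact (hg.mul_right (ih (by omega))).mul_right hgi

/-- inverse-form of an intertwining relation. -/
lemma inv_form (hq0 : q ≠ 0) {c : ℕ} {E E' : B 𝕜 n q}
    (h : gTot 𝕜 n q c * E = E' * gTot 𝕜 n q c) :
    E = ginvTot 𝕜 n q c * (E' * gTot 𝕜 n q c) := by
  rw [← h, ← mul_assoc, ginvT_gT 𝕜 n q hq0, one_mul]

/-- `e_z g_z` commutes with `e_{x,z}`. -/
lemma L_C_aux (hq0 : q ≠ 0) (d : ℕ) : ∀ x z : ℕ, z + 1 < n → z = x + d + 1 →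
    Commute (eTot 𝕜 n q z * gTot 𝕜 n q z) (eabN 𝕜 n q x z) := by
  induction d with
  | zero =>
    intro x z hz hxz
    subst hxz
    rw [eabN_base]
    show eTot 𝕜 n q (x+1) * gTot 𝕜 n q (x+1) * eTot 𝕜 n q x
        = eTot 𝕜 n q x * (eTot 𝕜 n q (x+1) * gTot 𝕜 n q (x+1))
    have h1 := eeg1_t 𝕜 n q x (x+1) (by omega) (by omega) (Or.inl rfl)
    have h2 := eeg2_t 𝕜 n q x (x+1) (by omega) (by omega) (Or.inl rfl)
    calc eTot 𝕜 n q (x+1) * gTot 𝕜 n q (x+1) * eTot 𝕜 n q x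
        = gTot 𝕜 n q (x+1) * eTot 𝕜 n q (x+1) * eTot 𝕜 n q x := by
          rw [(comm_ge_self 𝕜 n q (x+1)).eq]
      _ = gTot 𝕜 n q (x+1) * (eTot 𝕜 n q (x+1) * eTot 𝕜 n q x) := by rw [mul_assoc]
      _ = gTot 𝕜 n q (x+1) * (eTot 𝕜 n q x * eTot 𝕜 n q (x+1)) := by
          rw [(comm_ee 𝕜 n q (x+1) x).eq]
      _ = gTot 𝕜 n q (x+1) * eTot 𝕜 n q x * eTot 𝕜 n q (x+1) := by rw [mul_assoc]
      _ = eTot 𝕜 n q x * eTot 𝕜 n q (x+1) * gTot 𝕜 n q (x+1) := by rw [h1, h2]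
      _ = eTot 𝕜 n q x * (eTot 𝕜 n q (x+1) * gTot 𝕜 n q (x+1)) := by rw [mul_assoc]
  | succ d ih =>
    intro x z hz hxz
    have hR := L_R 𝕜 n q hq0 x z (by omega) (by omega)
    rw [inv_form 𝕜 n q hq0 hR.eq]
    have hXg : Commute (eTot 𝕜 n q z * gTot 𝕜 n q z) (gTot 𝕜 n q x) :=
      ((comm_ge_tot 𝕜 n q x z (by omega)).symm.mul_left (comm_gg 𝕜 n q z x (by omega)))
    have hXe : Commute (eTot 𝕜 n q z * gTot 𝕜 n q z) (eTot 𝕜 n q x) :=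
      ((comm_ee 𝕜 n q z x).mul_left (comm_ge_tot 𝕜 n q z x (by omega)))
    have hXgi : Commute (eTot 𝕜 n q z * gTot 𝕜 n q z) (ginvTot 𝕜 n q x) :=
      comm_ginvT 𝕜 n q x hXg hXe
    exact hXgi.mul_right ((ih (x+1) z hz (by omega)).mul_right hXg)

lemma L_C (hq0 : q ≠ 0) (x z : ℕ) (hxz : x < z) (hz : z + 1 < n) :
    Commute (eTot 𝕜 n q z * gTot 𝕜 n q z) (eabN 𝕜 n q x z) :=
  L_C_aux 𝕜 n q hq0 (z - x - 1) x z hz (by omega)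

/-- conjugation square helper: if `e_c g_c` commutes with `E` then
`g_c (g_c E g_c⁻¹) = E g_c`. -/
lemma L_sq (hq0 : q ≠ 0) (c : ℕ) (hc : c + 1 < n) {E : B 𝕜 n q}
    (h : Commute (eTot 𝕜 n q c * gTot 𝕜 n q c) E) :
    gTot 𝕜 n q c * (gTot 𝕜 n q c * E * ginvTot 𝕜 n q c) = E * gTot 𝕜 n q c := by
  have hsq : gTot 𝕜 n q c * gTot 𝕜 n q c * E = E * (gTot 𝕜 n q c * gTot 𝕜 n q c) := by
    rw [gsq_t 𝕜 n q c hc]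
    rw [add_mul, mul_add, smul_mul_assoc, mul_smul_comm]
    rw [(Algebra.commutes q E).symm]
    rw [mul_assoc, ← h.eq, ← mul_assoc]
  calc gTot 𝕜 n q c * (gTot 𝕜 n q c * E * ginvTot 𝕜 n q c)
      = (gTot 𝕜 n q c * gTot 𝕜 n q c * E) * ginvTot 𝕜 n q c := by simp only [mul_assoc]
    _ = E * (gTot 𝕜 n q c * gTot 𝕜 n q c) * ginvTot 𝕜 n q c := by rw [hsq]
    _ = E * gTot 𝕜 n q c * (gTot 𝕜 n q c * ginvTot 𝕜 n q c) := by simp only [mul_assoc]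
    _ = E * gTot 𝕜 n q c := by rw [gT_ginvT 𝕜 n q hq0, mul_one]

/-- raising the top index: `g_y e_{x,y} = e_{x,y+1} g_y`. -/
lemma A2 (hq0 : q ≠ 0) (x y : ℕ) (hxy : x < y) :
    SemiconjBy (gTot 𝕜 n q y) (eabN 𝕜 n q x y) (eabN 𝕜 n q x (y+1)) := by
  show gTot 𝕜 n q y * eabN 𝕜 n q x y = eabN 𝕜 n q x (y+1) * gTot 𝕜 n q y
  rw [eabN_succ 𝕜 n q x y hxy, mul_assoc, mul_assoc, ginvT_gT 𝕜 n q hq0, mul_one]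

/-- lowering the top index: `g_y e_{x,y+1} = e_{x,y} g_y`. -/
lemma A3 (hq0 : q ≠ 0) (x y : ℕ) (hxy : x < y) (hy : y + 1 < n) :
    SemiconjBy (gTot 𝕜 n q y) (eabN 𝕜 n q x (y+1)) (eabN 𝕜 n q x y) := by
  show gTot 𝕜 n q y * eabN 𝕜 n q x (y+1) = eabN 𝕜 n q x y * gTot 𝕜 n q y
  rw [eabN_succ 𝕜 n q x y hxy]
  exact L_sq 𝕜 n q hq0 y hy (L_C 𝕜 n q hq0 x y hxy hy)

end BT
end


noncomputable section
namespace BT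

variable (𝕜 : Type) [Field 𝕜] (n : ℕ) (q : 𝕜)

lemma ginvT_eq (a : ℕ) (h : a + 1 < n) :
    ginvTot 𝕜 n q a = q⁻¹ • gTot 𝕜 n q a + (q⁻¹ - 1) • eTot 𝕜 n q a := by
  unfold ginvTot gTot eTot
  rw [dif_pos h, dif_pos h, dif_pos h]

lemma comm_g_ee (x : ℕ) (hx : x + 2 < n) :
    Commute (gTot 𝕜 n q (x+1)) (eTot 𝕜 n q x * eTot 𝕜 n q (x+1)) := by
  have h1 := eeg1_t 𝕜 n q x (x+1) (by omega) (by omega) (Or.inl rfl)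
  have h2 := eeg2_t 𝕜 n q x (x+1) (by omega) (by omega) (Or.inl rfl)
  show gTot 𝕜 n q (x+1) * (eTot 𝕜 n q x * eTot 𝕜 n q (x+1))
      = eTot 𝕜 n q x * eTot 𝕜 n q (x+1) * gTot 𝕜 n q (x+1)
  rw [h1, h2, mul_assoc]

lemma ee_e (x : ℕ) :
    eTot 𝕜 n q x * eTot 𝕜 n q (x+1) * eTot 𝕜 n q x
      = eTot 𝕜 n q x * eTot 𝕜 n q (x+1) := by
  rw [mul_assoc, (comm_ee 𝕜 n q (x+1) x).eq, ← mul_assoc, esq_t]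

lemma e_ginv_e (x : ℕ) (hx : x + 2 < n) :
    eTot 𝕜 n q x * ginvTot 𝕜 n q (x+1) * eTot 𝕜 n q x
      = eTot 𝕜 n q x * eTot 𝕜 n q (x+1) * ginvTot 𝕜 n q (x+1) := by
  have h1 := (eeg1_t 𝕜 n q x (x+1) (by omega) (by omega) (Or.inl rfl)).symm
  rw [ginvT_eq 𝕜 n q (x+1) (by omega)]
  simp only [mul_add, add_mul, mul_smul_comm, smul_mul_assoc]
  rw [h1, ee_e, mul_assoc (eTot 𝕜 n q x) (eTot 𝕜 n q (x+1)) (eTot 𝕜 n q (x+1)),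
    esq_t]

/-- `e_x e_{x+1,y} = e_{x,y} e_x`. -/
lemma L_D (hq0 : q ≠ 0) (x y : ℕ) (hxy : x + 2 ≤ y) (hy : y < n) :
    SemiconjBy (eTot 𝕜 n q x) (eabN 𝕜 n q (x+1) y) (eabN 𝕜 n q x y) := by
  revert hy
  induction y, hxy using Nat.le_induction with
  | base =>
    intro hy
    rw [show x + 2 = (x+1) + 1 from rfl, eabN_succ 𝕜 n q x (x+1) (by omega),
      eabN_base, eabN_base]
    show eTot 𝕜 n q x * eTot 𝕜 n q (x+1)
        = gTot 𝕜 n q (x+1) * eTot 𝕜 n q x * ginvTot 𝕜 n q (x+1) * eTot 𝕜 n q x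
    calc eTot 𝕜 n q x * eTot 𝕜 n q (x+1)
        = gTot 𝕜 n q (x+1) * (eTot 𝕜 n q x * eTot 𝕜 n q (x+1)) * ginvTot 𝕜 n q (x+1) := by
          rw [(comm_g_ee 𝕜 n q x hy).eq, mul_assoc, gT_ginvT 𝕜 n q hq0, mul_one]
      _ = gTot 𝕜 n q (x+1) * (eTot 𝕜 n q x * eTot 𝕜 n q (x+1) * ginvTot 𝕜 n q (x+1)) := by
          rw [mul_assoc]
      _ = gTot 𝕜 n q (x+1) * (eTot 𝕜 n q x * ginvTot 𝕜 n q (x+1) * eTot 𝕜 n q x) := by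
          rw [e_ginv_e 𝕜 n q x hy]
      _ = gTot 𝕜 n q (x+1) * eTot 𝕜 n q x * ginvTot 𝕜 n q (x+1) * eTot 𝕜 n q x := by
          simp only [mul_assoc]
  | succ y hy ih =>
    intro hyn
    rw [eabN_succ 𝕜 n q x y (by omega), eabN_succ 𝕜 n q (x+1) y (by omega)]
    have hg : SemiconjBy (eTot 𝕜 n q x) (gTot 𝕜 n q y) (gTot 𝕜 n q y) :=
      (comm_ge_tot 𝕜 n q y x (by omega)).symm
    have hgi : SemiconjBy (eTot 𝕜 n q x) (ginvTot 𝕜 n q y) (ginvTot 𝕜 n q y) :=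
      comm_ginvT 𝕜 n q y (comm_ge_tot 𝕜 n q y x (by omega)).symm (comm_ee 𝕜 n q x y)
    exact (hg.mul_right (ih (by omega))).mul_right hgi

/-- lowering the bottom index: `g_x e_{x+1,y} = e_{x,y} g_x`. -/
lemma A6 (hq0 : q ≠ 0) (x y : ℕ) (hxy : x + 2 ≤ y) (hy : y < n) (hx : x + 1 < n) :
    SemiconjBy (gTot 𝕜 n q x) (eabN 𝕜 n q (x+1) y) (eabN 𝕜 n q x y) := by
  have hR := L_R 𝕜 n q hq0 x y hxy hy
  have hcomm : Commute (eTot 𝕜 n q x * gTot 𝕜 n q x) (eabN 𝕜 n q x y) := by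
    show eTot 𝕜 n q x * gTot 𝕜 n q x * eabN 𝕜 n q x y
        = eabN 𝕜 n q x y * (eTot 𝕜 n q x * gTot 𝕜 n q x)
    calc eTot 𝕜 n q x * gTot 𝕜 n q x * eabN 𝕜 n q x y
        = eTot 𝕜 n q x * (gTot 𝕜 n q x * eabN 𝕜 n q x y) := by rw [mul_assoc]
      _ = eTot 𝕜 n q x * (eabN 𝕜 n q (x+1) y * gTot 𝕜 n q x) := by rw [hR.eq]
      _ = (eTot 𝕜 n q x * eabN 𝕜 n q (x+1) y) * gTot 𝕜 n q x := by rw [mul_assoc]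
      _ = (eabN 𝕜 n q x y * eTot 𝕜 n q x) * gTot 𝕜 n q x := by
          rw [(L_D 𝕜 n q hq0 x y hxy hy).eq]
      _ = eabN 𝕜 n q x y * (eTot 𝕜 n q x * gTot 𝕜 n q x) := by rw [mul_assoc]
  have hE2 : gTot 𝕜 n q x * eabN 𝕜 n q x y * ginvTot 𝕜 n q x = eabN 𝕜 n q (x+1) y := by
    rw [hR.eq, mul_assoc, gT_ginvT 𝕜 n q hq0, mul_one]
  show gTot 𝕜 n q x * eabN 𝕜 n q (x+1) y = eabN 𝕜 n q x y * gTot 𝕜 n q x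
  rw [← hE2]
  exact L_sq 𝕜 n q hq0 x hx hcomm

/-- `e_z` commutes with `e_{x,z}` (shared top point). -/
lemma L_Et_aux (hq0 : q ≠ 0) (d : ℕ) : ∀ x z : ℕ, z < n → z = x + d + 1 →
    Commute (eTot 𝕜 n q z) (eabN 𝕜 n q x z) := by
  induction d with
  | zero =>
    intro x z hz hxz; subst hxz
    rw [eabN_base]; exact comm_ee 𝕜 n q (x+1) x
  | succ d ih =>
    intro x z hz hxz
    have hR := L_R 𝕜 n q hq0 x z (by omega) (by omega)
    rw [inv_form 𝕜 n q hq0 hR.eq]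
    have hXg : Commute (eTot 𝕜 n q z) (gTot 𝕜 n q x) :=
      (comm_ge_tot 𝕜 n q x z (by omega)).symm
    have hXgi : Commute (eTot 𝕜 n q z) (ginvTot 𝕜 n q x) :=
      comm_ginvT 𝕜 n q x hXg (comm_ee 𝕜 n q z x)
    exact hXgi.mul_right ((ih (x+1) z hz (by omega)).mul_right hXg)

lemma L_Et (hq0 : q ≠ 0) (x z : ℕ) (hxz : x < z) (hz : z < n) :
    Commute (eTot 𝕜 n q z) (eabN 𝕜 n q x z) :=
  L_Et_aux 𝕜 n q hq0 (z - x - 1) x z hz (by omega)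

/-- `e_x` commutes with `e_{x,y}` (shared bottom point). -/
lemma L_Eb (hq0 : q ≠ 0) (x y : ℕ) (hxy : x < y) (hy : y < n) :
    Commute (eTot 𝕜 n q x) (eabN 𝕜 n q x y) := by
  revert hy
  induction y, hxy using Nat.le_induction with
  | base => intro hy; rw [eabN_base]
  | succ y hy ih =>
    intro hyn
    rcases Nat.lt_or_ge (x+1) y with hlt | hge
    · -- y ≥ x+2 : far step
      rw [eabN_succ 𝕜 n q x y (by omega)]
      have hg : Commute (eTot 𝕜 n q x) (gTot 𝕜 n q y) :=
        (comm_ge_tot 𝕜 n q y x (by omega)).symm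
      have hgi : Commute (eTot 𝕜 n q x) (ginvTot 𝕜 n q y) :=
        comm_ginvT 𝕜 n q y hg (comm_ee 𝕜 n q x y)
      exact (hg.mul_right (ih (by omega))).mul_right hgi
    · -- y = x+1
      have hyx : y = x + 1 := by omega
      subst hyx
      rw [eabN_succ 𝕜 n q x (x+1) (by omega), eabN_base]
      have h1 := (eeg1_t 𝕜 n q x (x+1) (by omega) (by omega) (Or.inl rfl)).symm
      show eTot 𝕜 n q x * (gTot 𝕜 n q (x+1) * eTot 𝕜 n q x * ginvTot 𝕜 n q (x+1))
          = gTot 𝕜 n q (x+1) * eTot 𝕜 n q x * ginvTot 𝕜 n q (x+1) * eTot 𝕜 n q x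
      have lhs : eTot 𝕜 n q x * (gTot 𝕜 n q (x+1) * eTot 𝕜 n q x * ginvTot 𝕜 n q (x+1))
          = eTot 𝕜 n q x * eTot 𝕜 n q (x+1) := by
        calc eTot 𝕜 n q x * (gTot 𝕜 n q (x+1) * eTot 𝕜 n q x * ginvTot 𝕜 n q (x+1))
            = eTot 𝕜 n q x * gTot 𝕜 n q (x+1) * eTot 𝕜 n q x * ginvTot 𝕜 n q (x+1) := by
              simp only [mul_assoc]
          _ = eTot 𝕜 n q x * eTot 𝕜 n q (x+1) * gTot 𝕜 n q (x+1) * ginvTot 𝕜 n q (x+1) := by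
              rw [h1]
          _ = eTot 𝕜 n q x * eTot 𝕜 n q (x+1) := by
              rw [mul_assoc, gT_ginvT 𝕜 n q hq0, mul_one]
      have rhs : gTot 𝕜 n q (x+1) * eTot 𝕜 n q x * ginvTot 𝕜 n q (x+1) * eTot 𝕜 n q x
          = eTot 𝕜 n q x * eTot 𝕜 n q (x+1) := by
        calc gTot 𝕜 n q (x+1) * eTot 𝕜 n q x * ginvTot 𝕜 n q (x+1) * eTot 𝕜 n q x
            = gTot 𝕜 n q (x+1) * (eTot 𝕜 n q x * ginvTot 𝕜 n q (x+1) * eTot 𝕜 n q x) := by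
              simp only [mul_assoc]
          _ = gTot 𝕜 n q (x+1) * (eTot 𝕜 n q x * eTot 𝕜 n q (x+1) * ginvTot 𝕜 n q (x+1)) := by
              rw [e_ginv_e 𝕜 n q x hyn]
          _ = gTot 𝕜 n q (x+1) * (eTot 𝕜 n q x * eTot 𝕜 n q (x+1)) * ginvTot 𝕜 n q (x+1) := by
              simp only [mul_assoc]
          _ = eTot 𝕜 n q x * eTot 𝕜 n q (x+1) * gTot 𝕜 n q (x+1) * ginvTot 𝕜 n q (x+1) := by
              rw [(comm_g_ee 𝕜 n q x hyn).eq]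
          _ = eTot 𝕜 n q x * eTot 𝕜 n q (x+1) := by
              rw [mul_assoc, gT_ginvT 𝕜 n q hq0, mul_one]
      rw [lhs, rhs]
end BT
end


noncomputable section
namespace BT

variable (𝕜 : Type) [Field 𝕜] (n : ℕ) (q : 𝕜)

lemma I1 (hq0 : q ≠ 0) (c : ℕ) (hc2 : c + 2 < n) :
    ginvTot 𝕜 n q (c+1) * (gTot 𝕜 n q c * gTot 𝕜 n q (c+1))
      = gTot 𝕜 n q c * gTot 𝕜 n q (c+1) * ginvTot 𝕜 n q c := by
  calc ginvTot 𝕜 n q (c+1) * (gTot 𝕜 n q c * gTot 𝕜 n q (c+1))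
      = ginvTot 𝕜 n q (c+1) * (gTot 𝕜 n q c * gTot 𝕜 n q (c+1) *
          (gTot 𝕜 n q c * ginvTot 𝕜 n q c)) := by
        rw [gT_ginvT 𝕜 n q hq0, mul_one]
    _ = ginvTot 𝕜 n q (c+1) * (gTot 𝕜 n q c * gTot 𝕜 n q (c+1) * gTot 𝕜 n q c) *
          ginvTot 𝕜 n q c := by simp only [mul_assoc]
    _ = ginvTot 𝕜 n q (c+1) * (gTot 𝕜 n q (c+1) * gTot 𝕜 n q c * gTot 𝕜 n q (c+1)) *
          ginvTot 𝕜 n q c := by rw [braid_t 𝕜 n q c hc2]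
    _ = (ginvTot 𝕜 n q (c+1) * gTot 𝕜 n q (c+1)) *
          (gTot 𝕜 n q c * gTot 𝕜 n q (c+1) * ginvTot 𝕜 n q c) := by simp only [mul_assoc]
    _ = gTot 𝕜 n q c * gTot 𝕜 n q (c+1) * ginvTot 𝕜 n q c := by
        rw [ginvT_gT 𝕜 n q hq0, one_mul]

lemma I2 (hq0 : q ≠ 0) (c : ℕ) (hc2 : c + 2 < n) :
    gTot 𝕜 n q (c+1) * (ginvTot 𝕜 n q c * ginvTot 𝕜 n q (c+1))
      = ginvTot 𝕜 n q c * ginvTot 𝕜 n q (c+1) * gTot 𝕜 n q c := by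
  calc gTot 𝕜 n q (c+1) * (ginvTot 𝕜 n q c * ginvTot 𝕜 n q (c+1))
      = (ginvTot 𝕜 n q c * gTot 𝕜 n q c) * gTot 𝕜 n q (c+1) *
          (ginvTot 𝕜 n q c * ginvTot 𝕜 n q (c+1)) := by
        rw [ginvT_gT 𝕜 n q hq0, one_mul]
    _ = ginvTot 𝕜 n q c * (gTot 𝕜 n q c * gTot 𝕜 n q (c+1) * ginvTot 𝕜 n q c) *
          ginvTot 𝕜 n q (c+1) := by simp only [mul_assoc]
    _ = ginvTot 𝕜 n q c * (ginvTot 𝕜 n q (c+1) * (gTot 𝕜 n q c * gTot 𝕜 n q (c+1))) *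
          ginvTot 𝕜 n q (c+1) := by rw [I1 𝕜 n q hq0 c hc2]
    _ = ginvTot 𝕜 n q c * ginvTot 𝕜 n q (c+1) *
          (gTot 𝕜 n q c * (gTot 𝕜 n q (c+1) * ginvTot 𝕜 n q (c+1))) := by
        simp only [mul_assoc]
    _ = ginvTot 𝕜 n q c * ginvTot 𝕜 n q (c+1) * gTot 𝕜 n q c := by
        rw [gT_ginvT 𝕜 n q hq0, mul_one]

/-- `g_c` commutes with `e_{x,y}` when `x < c` and `c+1 < y` (interior case). -/
lemma comm_interior (hq0 : q ≠ 0) (x c y : ℕ) (hx : x < c) (hcy : c + 2 ≤ y)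
    (hy : y < n) : Commute (gTot 𝕜 n q c) (eabN 𝕜 n q x y) := by
  revert hy
  induction y, hcy using Nat.le_induction with
  | base =>
    intro hy
    rw [show c + 2 = (c+1) + 1 from rfl, eabN_succ 𝕜 n q x (c+1) (by omega),
      eabN_succ 𝕜 n q x c hx]
    set E := eabN 𝕜 n q x c with hE
    have hcE : Commute (gTot 𝕜 n q (c+1)) E :=
      comm_far_g 𝕜 n q (c+1) x c hx (Or.inr (by omega))
    show gTot 𝕜 n q c * (gTot 𝕜 n q (c+1) * (gTot 𝕜 n q c * E * ginvTot 𝕜 n q c) *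
        ginvTot 𝕜 n q (c+1))
      = gTot 𝕜 n q (c+1) * (gTot 𝕜 n q c * E * ginvTot 𝕜 n q c) *
        ginvTot 𝕜 n q (c+1) * gTot 𝕜 n q c
    calc gTot 𝕜 n q c * (gTot 𝕜 n q (c+1) * (gTot 𝕜 n q c * E * ginvTot 𝕜 n q c) *
          ginvTot 𝕜 n q (c+1))
        = gTot 𝕜 n q c * gTot 𝕜 n q (c+1) * gTot 𝕜 n q c * E *
            (ginvTot 𝕜 n q c * ginvTot 𝕜 n q (c+1)) := by simp only [mul_assoc]
      _ = gTot 𝕜 n q (c+1) * gTot 𝕜 n q c * gTot 𝕜 n q (c+1) * E *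
            (ginvTot 𝕜 n q c * ginvTot 𝕜 n q (c+1)) := by rw [braid_t 𝕜 n q c hy]
      _ = gTot 𝕜 n q (c+1) * gTot 𝕜 n q c * (gTot 𝕜 n q (c+1) * E) *
            (ginvTot 𝕜 n q c * ginvTot 𝕜 n q (c+1)) := by simp only [mul_assoc]
      _ = gTot 𝕜 n q (c+1) * gTot 𝕜 n q c * (E * gTot 𝕜 n q (c+1)) *
            (ginvTot 𝕜 n q c * ginvTot 𝕜 n q (c+1)) := by rw [hcE.eq]
      _ = gTot 𝕜 n q (c+1) * gTot 𝕜 n q c * E *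
            (gTot 𝕜 n q (c+1) * (ginvTot 𝕜 n q c * ginvTot 𝕜 n q (c+1))) := by
          simp only [mul_assoc]
      _ = gTot 𝕜 n q (c+1) * gTot 𝕜 n q c * E *
            (ginvTot 𝕜 n q c * ginvTot 𝕜 n q (c+1) * gTot 𝕜 n q c) := by
          rw [I2 𝕜 n q hq0 c hy]
      _ = gTot 𝕜 n q (c+1) * (gTot 𝕜 n q c * E * ginvTot 𝕜 n q c) *
            ginvTot 𝕜 n q (c+1) * gTot 𝕜 n q c := by simp only [mul_assoc]
  | succ y hy ih =>
    intro hyn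
    rw [eabN_succ 𝕜 n q x y (by omega)]
    have hg : Commute (gTot 𝕜 n q c) (gTot 𝕜 n q y) := comm_gg 𝕜 n q c y (by omega)
    have hgi : Commute (gTot 𝕜 n q c) (ginvTot 𝕜 n q y) :=
      comm_ginvT 𝕜 n q y hg (comm_ge_tot 𝕜 n q c y (by omega))
    exact (hg.mul_right (ih (by omega))).mul_right hgi

end BT
end


noncomputable section
namespace BT

variable (𝕜 : Type) [Field 𝕜] (n : ℕ) (q : 𝕜)

/-- separated pairs commute. -/
lemma L_sep (x y z w : ℕ) (hxy : x < y) (hzw : z < w) (hyz : y < z) (hw : w < n) :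
    Commute (eabN 𝕜 n q x y) (eabN 𝕜 n q z w) := by
  revert hw
  induction w, hzw using Nat.le_induction with
  | base =>
    intro hw
    rw [eabN_base]
    exact (comm_far_e 𝕜 n q z x y hxy (Or.inr hyz)).symm
  | succ w hw ih =>
    intro hwn
    rw [eabN_succ 𝕜 n q z w (by omega)]
    have hg : Commute (eabN 𝕜 n q x y) (gTot 𝕜 n q w) :=
      (comm_far_g 𝕜 n q w x y hxy (Or.inr (by omega))).symm
    have hgi : Commute (eabN 𝕜 n q x y) (ginvTot 𝕜 n q w) :=
      comm_ginvT 𝕜 n q w hg (comm_far_e 𝕜 n q w x y hxy (Or.inr (by omega))).symm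
    exact (hg.mul_right (ih (by omega))).mul_right hgi

/-- crossing, tight at both ends : `e_{x,y}` and `e_{x+1,y+1}` commute. -/
lemma L_crossminmin (hq0 : q ≠ 0) (x y : ℕ) (hxy : x + 2 ≤ y) (hy : y + 1 < n) :
    Commute (eabN 𝕜 n q x y) (eabN 𝕜 n q (x+1) (y+1)) := by
  revert hy
  induction y, hxy using Nat.le_induction with
  | base =>
    intro hy
    have h1 : SemiconjBy (gTot 𝕜 n q (x+1)) (eabN 𝕜 n q x (x+2)) (eabN 𝕜 n q x (x+1)) :=
      A3 𝕜 n q hq0 x (x+1) (by omega) (by omega)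
    have h2 : SemiconjBy (gTot 𝕜 n q (x+1)) (eabN 𝕜 n q (x+1) (x+3))
        (eabN 𝕜 n q (x+2) (x+3)) := L_R 𝕜 n q hq0 (x+1) (x+3) (by omega) (by omega)
    refine conj_comm 𝕜 n q hq0 (x+1) h1.eq h2.eq ?_
    rw [eabN_base, show x+3 = (x+2)+1 from rfl, eabN_base]
    exact comm_ee 𝕜 n q x (x+2)
  | succ y hy ih =>
    intro hyn
    have h1 : SemiconjBy (gTot 𝕜 n q y) (eabN 𝕜 n q x (y+1)) (eabN 𝕜 n q x y) :=
      A3 𝕜 n q hq0 x y (by omega) (by omega)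
    have h2 : Commute (gTot 𝕜 n q y) (eabN 𝕜 n q (x+1) (y+2)) :=
      comm_interior 𝕜 n q hq0 (x+1) y (y+2) (by omega) (by omega) (by omega)
    refine conj_comm 𝕜 n q hq0 y h1.eq h2.eq ?_
    rw [eabN_succ 𝕜 n q (x+1) (y+1) (by omega)]
    have hg : Commute (eabN 𝕜 n q x y) (gTot 𝕜 n q (y+1)) :=
      (comm_far_g 𝕜 n q (y+1) x y (by omega) (Or.inr (by omega))).symm
    have hgi : Commute (eabN 𝕜 n q x y) (ginvTot 𝕜 n q (y+1)) :=
      comm_ginvT 𝕜 n q (y+1) hg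
        (comm_far_e 𝕜 n q (y+1) x y (by omega) (Or.inr (by omega))).symm
    exact (hg.mul_right (ih (by omega))).mul_right hgi

/-- crossing, tight at the top : `e_{x,y}` and `e_{z,y+1}` commute (`x < z < y`). -/
lemma L_crossmin_aux (hq0 : q ≠ 0) (d : ℕ) : ∀ x z y : ℕ, x < z → z < y → y + 1 < n →
    z = x + d + 1 → Commute (eabN 𝕜 n q x y) (eabN 𝕜 n q z (y+1)) := by
  induction d with
  | zero =>
    intro x z y hxz hzy hy hz
    subst hz
    exact L_crossminmin 𝕜 n q hq0 x y (by omega) hy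
  | succ d ih =>
    intro x z y hxz hzy hy hz
    obtain ⟨c, rfl⟩ : ∃ c, z = c + 1 := ⟨z - 1, by omega⟩
    have h1 : Commute (gTot 𝕜 n q c) (eabN 𝕜 n q x y) :=
      comm_interior 𝕜 n q hq0 x c y (by omega) (by omega) (by omega)
    have h2 : SemiconjBy (gTot 𝕜 n q c) (eabN 𝕜 n q (c+1) (y+1)) (eabN 𝕜 n q c (y+1)) :=
      A6 𝕜 n q hq0 c (y+1) (by omega) (by omega) (by omega)
    exact conj_comm 𝕜 n q hq0 c h1.eq h2.eq
      (ih x c y (by omega) (by omega) hy (by omega))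

lemma L_crossmin (hq0 : q ≠ 0) (x z y : ℕ) (hxz : x < z) (hzy : z < y)
    (hy : y + 1 < n) : Commute (eabN 𝕜 n q x y) (eabN 𝕜 n q z (y+1)) :=
  L_crossmin_aux 𝕜 n q hq0 (z - x - 1) x z y hxz hzy hy (by omega)

/-- crossing pairs commute: `x < z < y < w`. -/
lemma L_cross (hq0 : q ≠ 0) (x z y w : ℕ) (hxz : x < z) (hzy : z < y) (hyw : y < w)
    (hw : w < n) : Commute (eabN 𝕜 n q x y) (eabN 𝕜 n q z w) := by
  revert hw
  induction w, hyw using Nat.le_induction with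
  | base => intro hw; exact L_crossmin 𝕜 n q hq0 x z y hxz hzy hw
  | succ w hw ih =>
    intro hwn
    rw [eabN_succ 𝕜 n q z w (by omega)]
    have hg : Commute (eabN 𝕜 n q x y) (gTot 𝕜 n q w) :=
      (comm_far_g 𝕜 n q w x y (by omega) (Or.inr (by omega))).symm
    have hgi : Commute (eabN 𝕜 n q x y) (ginvTot 𝕜 n q w) :=
      comm_ginvT 𝕜 n q w hg
        (comm_far_e 𝕜 n q w x y (by omega) (Or.inr (by omega))).symm
    exact (hg.mul_right (ih (by omega))).mul_right hgi

/-- nested pairs commute: `x < z < w < y`. -/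
lemma L_nest (hq0 : q ≠ 0) (x z w y : ℕ) (hxz : x < z) (hzw : z < w) (hwy : w < y)
    (hy : y < n) : Commute (eabN 𝕜 n q x y) (eabN 𝕜 n q z w) := by
  revert hy
  induction y, hwy using Nat.le_induction with
  | base =>
    intro hy
    have h1 : SemiconjBy (gTot 𝕜 n q w) (eabN 𝕜 n q x (w+1)) (eabN 𝕜 n q x w) :=
      A3 𝕜 n q hq0 x w (by omega) hy
    have h2 : SemiconjBy (gTot 𝕜 n q w) (eabN 𝕜 n q z w) (eabN 𝕜 n q z (w+1)) :=
      A2 𝕜 n q hq0 z w hzw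
    exact conj_comm 𝕜 n q hq0 w h1.eq h2.eq
      (L_crossmin 𝕜 n q hq0 x z w hxz hzw hy)
  | succ y hy ih =>
    intro hyn
    rw [eabN_succ 𝕜 n q x y (by omega)]
    have hg : Commute (gTot 𝕜 n q y) (eabN 𝕜 n q z w) :=
      comm_far_g 𝕜 n q y z w hzw (Or.inr (by omega))
    have hgi : Commute (ginvTot 𝕜 n q y) (eabN 𝕜 n q z w) :=
      comm_far_ginv 𝕜 n q y z w hzw (Or.inr (by omega))
    exact (hg.mul_left (ih (by omega))).mul_left hgi

/-- shared top point: `x < z < y`. -/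
lemma L_sharetop (hq0 : q ≠ 0) (x z y : ℕ) (hxz : x < z) (hzy : z < y) (hy : y < n) :
    Commute (eabN 𝕜 n q x y) (eabN 𝕜 n q z y) := by
  revert hy
  induction y, hzy using Nat.le_induction with
  | base =>
    intro hy
    have h1 : SemiconjBy (gTot 𝕜 n q z) (eabN 𝕜 n q x (z+1)) (eabN 𝕜 n q x z) :=
      A3 𝕜 n q hq0 x z hxz hy
    have h2 : SemiconjBy (gTot 𝕜 n q z) (eabN 𝕜 n q z (z+1)) (eabN 𝕜 n q z (z+1)) := by
      rw [eabN_base]; exact comm_ge_self 𝕜 n q z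
    refine conj_comm 𝕜 n q hq0 z h1.eq h2.eq ?_
    rw [eabN_base]
    exact (L_Et 𝕜 n q hq0 x z hxz (by omega)).symm
  | succ y hy ih =>
    intro hyn
    have h1 : SemiconjBy (gTot 𝕜 n q y) (eabN 𝕜 n q x (y+1)) (eabN 𝕜 n q x y) :=
      A3 𝕜 n q hq0 x y (by omega) hyn
    have h2 : SemiconjBy (gTot 𝕜 n q y) (eabN 𝕜 n q z (y+1)) (eabN 𝕜 n q z y) :=
      A3 𝕜 n q hq0 z y (by omega) hyn
    exact conj_comm 𝕜 n q hq0 y h1.eq h2.eq (ih (by omega))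

/-- shared bottom point: `x < y < w`. -/
lemma L_sharebot_aux (hq0 : q ≠ 0) (s : ℕ) : ∀ x y w : ℕ, x < y → y < w → w < n →
    y + w = s → Commute (eabN 𝕜 n q x y) (eabN 𝕜 n q x w) := by
  induction s using Nat.strong_induction_on with
  | _ s ih =>
    intro x y w hxy hyw hw hs
    rcases Nat.lt_or_ge (y+1) w with hlt | hge
    · -- w ≥ y + 2 : reduce the top of the second pair
      obtain ⟨v, rfl⟩ : ∃ v, w = v + 1 := ⟨w - 1, by omega⟩
      rw [eabN_succ 𝕜 n q x v (by omega)]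
      have hg : Commute (eabN 𝕜 n q x y) (gTot 𝕜 n q v) :=
        (comm_far_g 𝕜 n q v x y hxy (Or.inr (by omega))).symm
      have hgi : Commute (eabN 𝕜 n q x y) (ginvTot 𝕜 n q v) :=
        comm_ginvT 𝕜 n q v hg (comm_far_e 𝕜 n q v x y hxy (Or.inr (by omega))).symm
      exact (hg.mul_right (ih (y+v) (by omega) x y v hxy (by omega) (by omega) rfl)).mul_right hgi
    · -- w = y + 1
      have hw1 : w = y + 1 := by omega
      subst hw1
      rcases Nat.lt_or_ge (x+1) y with hxy2 | hxy2
      · -- y ≥ x+2 : conjugate by g_{y-1}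
        obtain ⟨c, rfl⟩ : ∃ c, y = c + 1 := ⟨y - 1, by omega⟩
        have h1 : SemiconjBy (gTot 𝕜 n q c) (eabN 𝕜 n q x (c+1)) (eabN 𝕜 n q x c) :=
          A3 𝕜 n q hq0 x c (by omega) (by omega)
        have h2 : Commute (gTot 𝕜 n q c) (eabN 𝕜 n q x (c+2)) :=
          comm_interior 𝕜 n q hq0 x c (c+2) (by omega) (by omega) (by omega)
        exact conj_comm 𝕜 n q hq0 c h1.eq h2.eq
          (ih (c + (c+2)) (by omega) x c (c+2) (by omega) (by omega) (by omega) rfl)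
      · -- y = x+1
        have hy1 : y = x + 1 := by omega
        subst hy1
        rw [eabN_base]
        exact L_Eb 𝕜 n q hq0 x (x+2) (by omega) (by omega)

lemma L_sharebot (hq0 : q ≠ 0) (x y w : ℕ) (hxy : x < y) (hyw : y < w) (hw : w < n) :
    Commute (eabN 𝕜 n q x y) (eabN 𝕜 n q x w) :=
  L_sharebot_aux 𝕜 n q hq0 (y+w) x y w hxy hyw hw rfl

/-- touching pairs: `x < y < w`, pairs `(x,y)` and `(y,w)`. -/
lemma L_touch (hq0 : q ≠ 0) (x y w : ℕ) (hxy : x < y) (hyw : y < w) (hw : w < n) :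
    Commute (eabN 𝕜 n q x y) (eabN 𝕜 n q y w) := by
  revert hw
  induction w, hyw using Nat.le_induction with
  | base =>
    intro hw
    rw [eabN_base]
    exact (L_Et 𝕜 n q hq0 x y hxy (by omega)).symm
  | succ w hw ih =>
    intro hwn
    rw [eabN_succ 𝕜 n q y w (by omega)]
    have hg : Commute (eabN 𝕜 n q x y) (gTot 𝕜 n q w) :=
      (comm_far_g 𝕜 n q w x y hxy (Or.inr (by omega))).symm
    have hgi : Commute (eabN 𝕜 n q x y) (ginvTot 𝕜 n q w) :=
      comm_ginvT 𝕜 n q w hg (comm_far_e 𝕜 n q w x y hxy (Or.inr (by omega))).symm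
    exact (hg.mul_right (ih (by omega))).mul_right hgi

/-- master commutation lemma, assuming `x ≤ z`. -/
lemma L_B_aux (hq0 : q ≠ 0) (x y z w : ℕ) (hxy : x < y) (hzw : z < w) (hy : y < n)
    (hw : w < n) (hxz : x ≤ z) : Commute (eabN 𝕜 n q x y) (eabN 𝕜 n q z w) := by
  rcases Nat.lt_or_ge x z with h1 | h1
  · rcases Nat.lt_trichotomy y z with h2 | h2 | h2
    · exact L_sep 𝕜 n q x y z w hxy hzw h2 hw
    · subst h2; exact L_touch 𝕜 n q hq0 x y w hxy hzw hw
    · rcases Nat.lt_trichotomy y w with h3 | h3 | h3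
      · exact L_cross 𝕜 n q hq0 x z y w h1 h2 h3 hw
      · subst h3; exact L_sharetop 𝕜 n q hq0 x z y h1 h2 hy
      · exact L_nest 𝕜 n q hq0 x z w y h1 (by omega) h3 hy
  · have hxz' : x = z := by omega
    subst hxz'
    rcases Nat.lt_trichotomy y w with h3 | h3 | h3
    · exact L_sharebot 𝕜 n q hq0 x y w hxy h3 hw
    · subst h3; exact Commute.refl _
    · exact (L_sharebot 𝕜 n q hq0 x w y hzw h3 hy).symm

/-- master commutation lemma. -/
lemma L_B (hq0 : q ≠ 0) (x y z w : ℕ) (hxy : x < y) (hzw : z < w) (hy : y < n)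
    (hw : w < n) : Commute (eabN 𝕜 n q x y) (eabN 𝕜 n q z w) := by
  rcases Nat.le_total x z with h | h
  · exact L_B_aux 𝕜 n q hq0 x y z w hxy hzw hy hw h
  · exact (L_B_aux 𝕜 n q hq0 z w x y hzw hxy hw hy h).symm

end BT
end


noncomputable section
namespace BT

variable (𝕜 : Type) [Field 𝕜] (n : ℕ) (q : 𝕜)

lemma eab_eq (a b : Fin n) (h : (a:ℕ) ≤ (b:ℕ)) :
    eab 𝕜 n q a b = eabN 𝕜 n q a b := if_pos h

lemma eab_symm (a b : Fin n) : eab 𝕜 n q a b = eab 𝕜 n q b a := by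
  rcases Nat.lt_trichotomy (a:ℕ) (b:ℕ) with h | h | h
  · rw [eab_eq 𝕜 n q a b (le_of_lt h), eab, if_neg (by omega)]
  · have : a = b := Fin.ext h
    subst this; rfl
  · rw [eab_eq 𝕜 n q b a (le_of_lt h), eab, if_neg (by omega)]

lemma sw_coe (c : ℕ) (hc : c + 1 < n) (v : Fin n) :
    ((sw n c hc v : Fin n) : ℕ)
      = if (v:ℕ) = c then c+1 else if (v:ℕ) = c+1 then c else (v:ℕ) := by
  unfold sw
  rw [Equiv.swap_apply_def]
  rcases eq_or_ne (v:ℕ) c with e1 | e1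
  · rw [if_pos (Fin.ext e1 : v = ⟨c, by omega⟩), if_pos e1]
  · rcases eq_or_ne (v:ℕ) (c+1) with e2 | e2
    · rw [if_neg (fun hh => e1 (by rw [hh])), if_pos (Fin.ext e2 : v = ⟨c+1, hc⟩),
        if_neg e1, if_pos e2]
    · rw [if_neg (fun hh => e1 (by rw [hh])), if_neg (fun hh => e2 (by rw [hh])),
        if_neg e1, if_neg e2]

lemma sw_fix (c : ℕ) (hc : c + 1 < n) (v : Fin n) (h : (v:ℕ) ≠ c ∧ (v:ℕ) ≠ c+1) :
    sw n c hc v = v := by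
  apply Fin.ext
  rw [sw_coe]
  split_ifs <;> omega

lemma sw_up (c : ℕ) (hc : c + 1 < n) (v : Fin n) (h : (v:ℕ) = c) :
    sw n c hc v = ⟨c+1, hc⟩ := by
  apply Fin.ext
  rw [sw_coe]
  split_ifs <;> simp <;> omega

lemma sw_down (c : ℕ) (hc : c + 1 < n) (v : Fin n) (h : (v:ℕ) = c+1) :
    sw n c hc v = ⟨c, by omega⟩ := by
  apply Fin.ext
  rw [sw_coe]
  split_ifs <;> simp <;> omega

lemma A_fin_lt (hq0 : q ≠ 0) (c : ℕ) (hc : c + 1 < n) (p r : Fin n)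
    (h : (p:ℕ) < (r:ℕ)) :
    gTot 𝕜 n q c * eab 𝕜 n q p r
      = eab 𝕜 n q (sw n c hc p) (sw n c hc r) * gTot 𝕜 n q c := by
  have hrn : (r:ℕ) < n := r.isLt
  by_cases h1 : c+1 < (p:ℕ) ∨ (r:ℕ) < c
  · -- far case
    rw [sw_fix n c hc p (by omega), sw_fix n c hc r (by omega),
      eab_eq 𝕜 n q p r (le_of_lt h)]
    exact (comm_far_g 𝕜 n q c p r h h1).eq
  · by_cases h2 : (p:ℕ) < c ∧ c+1 < (r:ℕ)
    · -- interior case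
      rw [sw_fix n c hc p (by omega), sw_fix n c hc r (by omega),
        eab_eq 𝕜 n q p r (le_of_lt h)]
      exact (comm_interior 𝕜 n q hq0 p c r h2.1 h2.2 hrn).eq
    · by_cases h3 : c = (r:ℕ)
      · -- c = y : raise the top
        rw [sw_fix n c hc p (by omega), sw_up n c hc r h3.symm,
          eab_eq 𝕜 n q p r (le_of_lt h), eab_eq 𝕜 n q p ⟨c+1, hc⟩ (by simp; omega)]
        have := (A2 𝕜 n q hq0 (p:ℕ) c (by omega)).eq
        simp only [← h3] at this ⊢
        exact this
      · by_cases h4 : c+1 = (r:ℕ) ∧ c = (p:ℕ)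
        · -- adjacent pair, c = x, y = x+1
          rw [sw_up n c hc p h4.2.symm, sw_down n c hc r h4.1.symm,
            eab_eq 𝕜 n q p r (le_of_lt h), eab_symm 𝕜 n q ⟨c+1, hc⟩ ⟨c, by omega⟩,
            eab_eq 𝕜 n q ⟨c, by omega⟩ ⟨c+1, hc⟩ (by simp)]
          have hp : (p:ℕ) = c := h4.2.symm
          have hr : (r:ℕ) = c+1 := h4.1.symm
          simp only [hp, hr, eabN_base]
          exact (comm_ge_self 𝕜 n q c).eq
        · by_cases h5 : c+1 = (r:ℕ)
          · -- c = y - 1 > x : lower the top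
            rw [sw_fix n c hc p (by omega), sw_down n c hc r h5.symm,
              eab_eq 𝕜 n q p r (le_of_lt h), eab_eq 𝕜 n q p ⟨c, by omega⟩ (by simp; omega)]
            have := (A3 𝕜 n q hq0 (p:ℕ) c (by omega) hc).eq
            simp only [← h5] at this ⊢
            exact this
          · by_cases h6 : c = (p:ℕ)
            · -- c = x, y > x+1 : raise the bottom
              rw [sw_up n c hc p h6.symm, sw_fix n c hc r (by omega),
                eab_eq 𝕜 n q p r (le_of_lt h), eab_eq 𝕜 n q ⟨c+1, hc⟩ r (by simp; omega)]
              have := (L_R 𝕜 n q hq0 c (r:ℕ) (by omega) hrn).eq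
              simp only [← h6] at this ⊢
              exact this
            · -- c + 1 = x : lower the bottom
              have hx : c+1 = (p:ℕ) := by omega
              rw [sw_down n c hc p hx.symm, sw_fix n c hc r (by omega),
                eab_eq 𝕜 n q p r (le_of_lt h), eab_eq 𝕜 n q ⟨c, by omega⟩ r (by simp; omega)]
              have := (A6 𝕜 n q hq0 c (r:ℕ) (by omega) hrn hc).eq
              simp only [← hx] at this ⊢
              exact this

lemma A_fin (hq0 : q ≠ 0) (c : ℕ) (hc : c + 1 < n) (p r : Fin n) (hpr : p ≠ r) :
    gTot 𝕜 n q c * eab 𝕜 n q p r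
      = eab 𝕜 n q (sw n c hc p) (sw n c hc r) * gTot 𝕜 n q c := by
  rcases Nat.lt_trichotomy (p:ℕ) (r:ℕ) with h | h | h
  · exact A_fin_lt 𝕜 n q hq0 c hc p r h
  · exact absurd (Fin.ext h) hpr
  · rw [eab_symm 𝕜 n q p r, eab_symm 𝕜 n q (sw n c hc p) (sw n c hc r)]
    exact A_fin_lt 𝕜 n q hq0 c hc r p h

/-- any two `eab`'s commute. -/
lemma eab_comm (hq0 : q ≠ 0) (p r s t : Fin n) (hpr : p ≠ r) (hst : s ≠ t) :
    Commute (eab 𝕜 n q p r) (eab 𝕜 n q s t) := by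
  have key : ∀ a b u v : Fin n, (a:ℕ) < (b:ℕ) → (u:ℕ) < (v:ℕ) →
      Commute (eab 𝕜 n q a b) (eab 𝕜 n q u v) := by
    intro a b u v hab huv
    rw [eab_eq 𝕜 n q a b (le_of_lt hab), eab_eq 𝕜 n q u v (le_of_lt huv)]
    exact L_B 𝕜 n q hq0 a b u v hab huv b.isLt v.isLt
  rcases Nat.lt_trichotomy (p:ℕ) (r:ℕ) with h | h | h
  · rcases Nat.lt_trichotomy (s:ℕ) (t:ℕ) with h' | h' | h'
    · exact key p r s t h h'
    · exact absurd (Fin.ext h') hst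
    · rw [eab_symm 𝕜 n q s t]; exact key p r t s h h'
  · exact absurd (Fin.ext h) hpr
  · rcases Nat.lt_trichotomy (s:ℕ) (t:ℕ) with h' | h' | h'
    · rw [eab_symm 𝕜 n q p r]; exact key r p s t h h'
    · exact absurd (Fin.ext h') hst
    · rw [eab_symm 𝕜 n q p r, eab_symm 𝕜 n q s t]; exact key r p t s h h'

end BT
end


open scoped Classical

noncomputable section
namespace BT

variable (𝕜 : Type) [Field 𝕜] (n : ℕ) (q : 𝕜)

def fA (A : Setoid (Fin n)) (p : Fin n × Fin n) : B 𝕜 n q :=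
  if A.r p.1 p.2 ∧ p.1 ≠ p.2 then eab 𝕜 n q p.1 p.2 else 1

lemma eSet_eq (A : Setoid (Fin n)) :
    eSet 𝕜 n q A = (((List.finRange n) ×ˢ (List.finRange n)).map (fA 𝕜 n q A)).prod :=
  rfl

lemma fA_comm (hq0 : q ≠ 0) (A : Setoid (Fin n)) (p r : Fin n × Fin n) :
    Commute (fA 𝕜 n q A p) (fA 𝕜 n q A r) := by
  unfold fA
  split_ifs with h1 h2 h2
  · exact eab_comm 𝕜 n q hq0 _ _ _ _ h1.2 h2.2
  · exact Commute.one_right _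
  · exact Commute.one_left _
  · exact Commute.one_left _

lemma fA_conj (hq0 : q ≠ 0) (c : ℕ) (hc : c + 1 < n) (A : Setoid (Fin n))
    (p : Fin n × Fin n) :
    gTot 𝕜 n q c * fA 𝕜 n q A p
      = fA 𝕜 n q (permSetoid n (sw n c hc) A) (sw n c hc p.1, sw n c hc p.2) *
        gTot 𝕜 n q c := by
  unfold fA
  by_cases hcond : A.r p.1 p.2 ∧ p.1 ≠ p.2
  · have hc1 : (permSetoid n (sw n c hc) A).r (sw n c hc p.1) (sw n c hc p.2) := by
      show A.r ((sw n c hc).symm (sw n c hc p.1)) ((sw n c hc).symm (sw n c hc p.2))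
      simpa using hcond.1
    have hc2 : sw n c hc p.1 ≠ sw n c hc p.2 := by
      intro hh
      exact hcond.2 ((sw n c hc).injective hh)
    rw [if_pos hcond, if_pos ⟨hc1, hc2⟩]
    exact A_fin 𝕜 n q hq0 c hc p.1 p.2 hcond.2
  · have hcond' : ¬((permSetoid n (sw n c hc) A).r (sw n c hc p.1) (sw n c hc p.2) ∧
        sw n c hc p.1 ≠ sw n c hc p.2) := by
      intro hh
      apply hcond
      refine ⟨?_, fun he => hh.2 (by rw [he])⟩
      have := hh.1
      show A.r p.1 p.2
      have h' : A.r ((sw n c hc).symm (sw n c hc p.1)) ((sw n c hc).symm (sw n c hc p.2)) := this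
      rwa [Equiv.symm_apply_apply, Equiv.symm_apply_apply] at h'
    rw [if_neg hcond, if_neg hcond', one_mul, mul_one]

lemma push_list (hq0 : q ≠ 0) (c : ℕ) (hc : c + 1 < n) (A : Setoid (Fin n))
    (L : List (Fin n × Fin n)) :
    gTot 𝕜 n q c * (L.map (fA 𝕜 n q A)).prod
      = ((L.map (fun p : Fin n × Fin n => (sw n c hc p.1, sw n c hc p.2))).map
          (fA 𝕜 n q (permSetoid n (sw n c hc) A))).prod * gTot 𝕜 n q c := by
  induction L with
  | nil => simp
  | cons p L ihL =>
    simp only [List.map_cons, List.prod_cons]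
    rw [← mul_assoc, fA_conj 𝕜 n q hq0 c hc A p, mul_assoc, ihL, ← mul_assoc]

lemma finRange_perm (σ : Equiv.Perm (Fin n)) :
    ((List.finRange n).map σ).Perm (List.finRange n) := by
  rw [← Multiset.coe_eq_coe, ← Multiset.map_coe]
  have h1 : (↑(List.finRange n) : Multiset (Fin n)) = (Finset.univ : Finset (Fin n)).val := by
    rw [Fin.univ_def]
  rw [h1]
  calc Multiset.map (⇑σ) Finset.univ.val
      = (Finset.univ.map σ.toEmbedding).val := by
        rw [Finset.map_val]; rfl
    _ = Finset.univ.val := by rw [Finset.map_univ_equiv]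

lemma product_map_perm (σ : Equiv.Perm (Fin n)) :
    ((((List.finRange n) ×ˢ (List.finRange n)).map
        (fun p : Fin n × Fin n => (σ p.1, σ p.2)))).Perm
      ((List.finRange n) ×ˢ (List.finRange n)) := by
  have hmap : (((List.finRange n) ×ˢ (List.finRange n)).map
      (fun p : Fin n × Fin n => (σ p.1, σ p.2)))
      = ((List.finRange n).map σ) ×ˢ ((List.finRange n).map σ) := by
    simp only [SProd.sprod, List.product, List.map_flatMap, List.flatMap_map]
    congr 1
    funext a
    simp [List.map_map, Function.comp]
  rw [hmap]
  exact (finRange_perm n σ).product (finRange_perm n σ)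

lemma eSet_conj (hq0 : q ≠ 0) (c : ℕ) (hc : c + 1 < n) (A : Setoid (Fin n)) :
    gTot 𝕜 n q c * eSet 𝕜 n q A
      = eSet 𝕜 n q (permSetoid n (sw n c hc) A) * gTot 𝕜 n q c := by
  rw [eSet_eq, eSet_eq, push_list 𝕜 n q hq0 c hc A]
  congr 1
  refine List.Perm.prod_eq' ?_ ?_
  · exact (product_map_perm n (sw n c hc)).map _
  · exact List.pairwise_map.2 (List.pairwise_of_forall fun p r =>
      fA_comm 𝕜 n q hq0 (permSetoid n (sw n c hc) A) p r)

end BT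
end


open scoped Classical

noncomputable section
namespace BT

variable {n : ℕ}

lemma permSetoid_r (σ : Equiv.Perm (Fin n)) (A : Setoid (Fin n)) (x y : Fin n) :
    permSetoid n σ A x y ↔ A (σ.symm x) (σ.symm y) := Iff.rfl

lemma permSetoid_le (σ : Equiv.Perm (Fin n)) (A C : Setoid (Fin n)) :
    A ≤ C ↔ permSetoid n σ A ≤ permSetoid n σ C := by
  constructor
  · intro h
    rw [Setoid.le_def]
    intro x y hxy
    exact Setoid.le_def.mp h hxy
  · intro h
    rw [Setoid.le_def]
    intro x y hxy
    have h1 : permSetoid n σ A (σ x) (σ y) := by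
      rw [permSetoid_r, Equiv.symm_apply_apply, Equiv.symm_apply_apply]
      exact hxy
    have h2 := Setoid.le_def.mp h h1
    rw [permSetoid_r, Equiv.symm_apply_apply, Equiv.symm_apply_apply] at h2
    exact h2

def qEquiv (σ : Equiv.Perm (Fin n)) (A : Setoid (Fin n)) :
    Quotient A ≃ Quotient (permSetoid n σ A) :=
  Quotient.congr σ (fun a b => by
    rw [permSetoid_r, Equiv.symm_apply_apply, Equiv.symm_apply_apply])

lemma nblocks_perm (σ : Equiv.Perm (Fin n)) (A : Setoid (Fin n)) :
    nblocks n (permSetoid n σ A) = nblocks n A :=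
  Nat.card_congr (qEquiv σ A).symm

lemma out_rel (σ : Equiv.Perm (Fin n)) (A : Setoid (Fin n)) (dA : Quotient A) :
    permSetoid n σ A ((qEquiv σ A dA).out) (σ dA.out) := by
  have h1 : (⟦(qEquiv σ A dA).out⟧ : Quotient (permSetoid n σ A)) = qEquiv σ A dA :=
    Quotient.out_eq _
  have h2 : qEquiv σ A dA = ⟦σ dA.out⟧ := by
    conv_lhs => rw [← Quotient.out_eq dA]
    rfl
  exact Quotient.exact (h1.trans h2)

lemma mcount_perm (σ : Equiv.Perm (Fin n)) (A B : Setoid (Fin n)) (hAB : A ≤ B)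
    (cB : Quotient B) :
    mcount n (permSetoid n σ A) (permSetoid n σ B) (qEquiv σ B cB) = mcount n A B cB := by
  unfold mcount
  refine Nat.card_congr (Equiv.subtypeEquiv (qEquiv σ A).symm ?_)
  intro dA'
  -- dA' : Quotient (permSetoid n σ A)
  set dA := (qEquiv σ A).symm dA' with hdA
  have hdA' : qEquiv σ A dA = dA' := by rw [hdA, Equiv.apply_symm_apply]
  -- key facts
  have ha : B (σ.symm ((qEquiv σ A dA).out)) dA.out := by
    have := out_rel σ A dA
    rw [permSetoid_r, Equiv.symm_apply_apply] at this
    exact Setoid.le_def.mp hAB this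
  have hb : B (σ.symm ((qEquiv σ B cB).out)) cB.out := by
    have := out_rel σ B cB
    rw [permSetoid_r, Equiv.symm_apply_apply] at this
    exact this
  rw [← hdA']
  show permSetoid n σ B ((qEquiv σ A dA).out) ((qEquiv σ B cB).out) ↔ B dA.out cB.out
  rw [permSetoid_r]
  constructor
  · intro h
    exact B.iseqv.trans (B.iseqv.symm ha) (B.iseqv.trans h hb)
  · intro h
    exact B.iseqv.trans ha (B.iseqv.trans h (B.iseqv.symm hb))

lemma mob_perm (σ : Equiv.Perm (Fin n)) (A C : Setoid (Fin n)) (hAC : A ≤ C) :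
    mob n (permSetoid n σ A) (permSetoid n σ C) = mob n A C := by
  unfold mob
  rw [if_pos hAC, if_pos ((permSetoid_le σ A C).mp hAC)]
  rw [nblocks_perm, nblocks_perm]
  congr 1
  refine Finset.prod_congr rfl fun i _ => ?_
  congr 1
  refine Nat.card_congr (Equiv.subtypeEquiv (qEquiv σ C) fun c => ?_).symm
  rw [mcount_perm σ A C hAC c]

end BT
end


open scoped Classical

noncomputable section
namespace BT

variable (𝕜 : Type) [Field 𝕜] (n : ℕ) (q : 𝕜)

lemma sw_symm (c : ℕ) (hc : c + 1 < n) : (sw n c hc).symm = sw n c hc :=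
  Equiv.symm_swap _ _

lemma permSetoid_invol (c : ℕ) (hc : c + 1 < n) (A : Setoid (Fin n)) :
    permSetoid n (sw n c hc) (permSetoid n (sw n c hc) A) = A := by
  apply Setoid.ext
  intro a b
  rw [permSetoid_r, permSetoid_r, sw_symm]
  unfold sw
  rw [Equiv.swap_apply_self, Equiv.swap_apply_self]

lemma ebar_conj (hq0 : q ≠ 0) (c : ℕ) (hc : c + 1 < n) (A : Setoid (Fin n)) :
    gTot 𝕜 n q c * ebar 𝕜 n q A
      = ebar 𝕜 n q (permSetoid n (sw n c hc) A) * gTot 𝕜 n q c := by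
  unfold ebar
  rw [Finset.mul_sum, Finset.sum_mul]
  refine Finset.sum_bij' (fun C _ => permSetoid n (sw n c hc) C)
    (fun C _ => permSetoid n (sw n c hc) C) ?_ ?_ ?_ ?_ ?_
  · intro C hC
    rw [Finset.mem_filter] at hC ⊢
    exact ⟨Finset.mem_univ _, (permSetoid_le (sw n c hc) A C).mp hC.2⟩
  · intro C hC
    rw [Finset.mem_filter] at hC ⊢
    refine ⟨Finset.mem_univ _, ?_⟩
    have := (permSetoid_le (sw n c hc) (permSetoid n (sw n c hc) A) C).mp hC.2
    rwa [permSetoid_invol] at this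
  · intro C _; exact permSetoid_invol n c hc C
  · intro C _; exact permSetoid_invol n c hc C
  · intro C hC
    rw [Finset.mem_filter] at hC
    rw [mul_smul_comm, smul_mul_assoc]
    rw [eSet_conj 𝕜 n q hq0 c hc C]
    rw [mob_perm (sw n c hc) A C hC.2]

end BT


end


open BT in
/-- in the bt-algebra `E_n(q)` (0-based indices, `σ_a = (a, a+1)`):
(a) `g_a e(A) = e(σ_a A) g_a`, and (b) `g_a ē(A) = ē(σ_a A) g_a`. -/
theorem statement11 (𝕜 : Type) [Field 𝕜] (n : ℕ) (q : 𝕜) (hq0 : q ≠ 0) (hq1 : q ≠ 1) :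
    ∀ (a : ℕ) (h : a + 1 < n) (A : Setoid (Fin n)),
      (g 𝕜 n q a h * eSet 𝕜 n q A
        = eSet 𝕜 n q (permSetoid n (sw n a h) A) * g 𝕜 n q a h)
      ∧ (g 𝕜 n q a h * ebar 𝕜 n q A
        = ebar 𝕜 n q (permSetoid n (sw n a h) A) * g 𝕜 n q a h) := by
  intro a h A
  have hg : gTot 𝕜 n q a = g 𝕜 n q a h := dif_pos h
  constructor
  · rw [← hg]; exact eSet_conj 𝕜 n q hq0 a h A
  · rw [← hg]; exact ebar_conj 𝕜 n q hq0 a h A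

end
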